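/- If Player O has a winning strategy in the block game Γ'_f(L) for some f : ℕ → ℕ₊, then Player O has a winning strategy in the delay game Γ_{const_D}(L) with constant delay D = 2·max(f(0), f(1)) − 1 when f is constant (in particular, if f ≡ n' then Player O wins Γ_{const_{2n'−1}}(L)). -/

import Mathlib

/-- `Ssum f i = f 0 + ⋯ + f (i-1)`. -/
def Ssum (f : ℕ → ℕ) (i : ℕ) : ℕ := ∑ k ∈ Finset.range i, f k

/-- Player O has a winning strategy in the delay game `Γ_f(L)`. -/
def OWinsDelay (L : Set (ℕ → Bool × Bool)) (f : ℕ → ℕ) : Prop :=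
  ∃ σ : ℕ → (ℕ → Bool) → Bool,
    (∀ i : ℕ, ∀ α β : ℕ → Bool, (∀ j < Ssum f (i + 1), α j = β j) → σ i α = σ i β) ∧
    ∀ α : ℕ → Bool, (fun i => (α i, σ i α)) ∈ L

/-- Player I has a winning strategy in the delay game `Γ_f(L)`: a causal map from
Player O's bits to Player I's bits such that no resulting play lies in `L`. -/
def IWinsDelay (L : Set (ℕ → Bool × Bool)) (f : ℕ → ℕ) : Prop :=
  ∃ τ : (ℕ → Bool) → (ℕ → Bool),
    (∀ β β' : ℕ → Bool, ∀ i p : ℕ, Ssum f i ≤ p → p < Ssum f (i + 1) →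
      (∀ j < i, β j = β' j) → τ β p = τ β' p) ∧
    ∀ β : ℕ → Bool, (fun n => (τ β n, β n)) ∉ L

/-- Infinite concatenation of a sequence of (nonempty) finite blocks. -/
def flatSeq (w : ℕ → List Bool) : ℕ → Bool :=
  fun n => (((List.range (n + 1)).map w).flatten.getD n false)

/-- The sequence of Player I's blocks in the block game, given his first block `u0`,
his strategy `τ` (mapping Player O's previous blocks `v 0, …, v (i-1)` to the block
`u (i+1)`), and Player O's blocks `v`. -/
def blockU (u0 : List Bool) (τ : List (List Bool) → List Bool)
    (v : ℕ → List Bool) : ℕ → List Bool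
  | 0 => u0
  | i + 1 => τ (List.ofFn fun j : Fin i => v j)

/-- Player I has a winning strategy in the block game `Γ'_f(L)`: he first plays
`u 0` and `u 1`, and after Player O's block `v (i-1)` he plays `u (i+1)`; his blocks
have lengths in `[f i, 2 f i]` and for all responses of Player O with matching
lengths the resulting play is not in `L`. -/
def IWinsBlock (L : Set (ℕ → Bool × Bool)) (f : ℕ → ℕ) : Prop :=
  ∃ u0 : List Bool, ∃ τ : List (List Bool) → List Bool,
    ∀ v : ℕ → List Bool,
      (∀ i, (v i).length = (blockU u0 τ v i).length) →
        ((∀ i, f i ≤ (blockU u0 τ v i).length ∧ (blockU u0 τ v i).length ≤ 2 * f i) ∧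
         (fun n => (flatSeq (blockU u0 τ v) n, flatSeq v n)) ∉ L)

/-- Player O has a winning strategy in the block game `Γ'_f(L)`: a map `σ` producing
the block `v i` from Player I's blocks `u 0, …, u (i+1)`, with `|v i| = |u i|`, such
that against every sequence of Player I blocks with lengths in `[f i, 2 f i]` the
resulting play is in `L`. -/
def OWinsBlock (L : Set (ℕ → Bool × Bool)) (f : ℕ → ℕ) : Prop :=
  ∃ σ : List (List Bool) → List Bool,
    ∀ u : ℕ → List Bool,
      (∀ i, f i ≤ (u i).length ∧ (u i).length ≤ 2 * f i) →
        ((∀ i, (σ (List.ofFn fun j : Fin (i + 2) => u j)).length = (u i).length) ∧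
         (fun n => (flatSeq u n,
            flatSeq (fun i => σ (List.ofFn fun j : Fin (i + 2) => u j)) n)) ∈ L)

/-- The constant-delay function: `const_D 0 = D + 1` and `const_D i = 1` for `i > 0`. -/
def constd (D : ℕ) : ℕ → ℕ := fun i => if i = 0 then D + 1 else 1

/-!
Player O cuts Player I's bits into chunks of length `n` and feeds them to her block strategy;
her `i`-th bit is bit `i % n` of the block answering chunk `i / n`. That block is computed from
chunks `0, …, i / n + 1`, i.e. from the bits before position `n * (i / n + 2) ≤ i + 2 * n`,
so a delay of `2 n - 1` suffices.
-/

lemma Ssum_constd_succ (D i : ℕ) : Ssum (constd D) (i + 1) = D + 1 + i := by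
  induction i with
  | zero => simp [Ssum, constd]
  | succ k ih =>
    rw [Ssum, Finset.sum_range_succ, ← Ssum, ih, constd, if_neg k.succ_ne_zero]
    omega

lemma getD_flatten_map_range {β : Type*} {w : ℕ → List β} {n : ℕ}
    (hw : ∀ j, (w j).length = n) (d : β) {m p : ℕ} (hp : p < n * m) :
    ((List.range m).map w).flatten.getD p d = (w (p / n)).getD (p % n) d := by
  induction m with
  | zero => simp at hp
  | succ m ih =>
    have hlen : ((List.range m).map w).flatten.length = n * m := by
      simp [List.length_flatten, Function.comp_def, hw, mul_comm]
    rw [List.range_succ, List.map_append, List.flatten_append]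
    by_cases hpm : p < n * m
    · rw [List.getD_append _ _ _ _ (hlen ▸ hpm), ih hpm]
    · obtain ⟨r, rfl, hr⟩ : ∃ r, p = n * m + r ∧ r < n :=
        ⟨p - n * m, by rw [Nat.mul_succ] at hp; omega⟩
      rw [List.getD_append_right _ _ _ _ (by omega)]
      simp [hlen, Nat.mul_add_div (by omega : 0 < n), Nat.div_eq_of_lt hr,
        Nat.mod_eq_of_lt hr]

lemma flatSeq_eq_getD {w : ℕ → List Bool} {n : ℕ} (hn : 0 < n) (hw : ∀ j, (w j).length = n)
    (p : ℕ) : flatSeq w p = (w (p / n)).getD (p % n) false :=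
  getD_flatten_map_range hw false (by nlinarith)

def chunks {β : Type*} (n : ℕ) (α : ℕ → β) (j : ℕ) : List β :=
  List.ofFn fun t : Fin n => α (n * j + t)

@[simp]
lemma length_chunks {β : Type*} (n : ℕ) (α : ℕ → β) (j : ℕ) : (chunks n α j).length = n := by
  simp [chunks]

lemma flatSeq_chunks {n : ℕ} (hn : 0 < n) (α : ℕ → Bool) : flatSeq (chunks n α) = α := by
  funext p
  rw [flatSeq_eq_getD hn (length_chunks n α) p, chunks,
    List.getD_eq_getElem _ _ (by simpa using Nat.mod_lt p hn)]
  simp [Nat.div_add_mod]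

lemma ofFn_chunks_congr {β : Type*} {n k : ℕ} {α α' : ℕ → β} (h : ∀ j < n * k, α j = α' j) :
    List.ofFn (fun j : Fin k => chunks n α j) = List.ofFn (fun j : Fin k => chunks n α' j) := by
  congr 1
  funext j
  refine congrArg List.ofFn (funext fun t => h _ ?_)
  have : n * (j + 1) ≤ n * k := Nat.mul_le_mul_left n j.isLt
  rw [Nat.mul_succ] at this
  omega

def delayStrategyOfBlock (n : ℕ) (σ : List (List Bool) → List Bool) (i : ℕ) (α : ℕ → Bool) :
    Bool :=
  (σ (List.ofFn fun j : Fin (i / n + 2) => chunks n α j)).getD (i % n) false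

lemma delayStrategyOfBlock_congr (n : ℕ) (σ : List (List Bool) → List Bool) {i : ℕ}
    {α α' : ℕ → Bool} (h : ∀ j < i + 2 * n, α j = α' j) :
    delayStrategyOfBlock n σ i α = delayStrategyOfBlock n σ i α' := by
  have : n * (i / n) ≤ i := Nat.mul_div_le i n
  unfold delayStrategyOfBlock
  rw [ofFn_chunks_congr fun j hj => h j (by rw [Nat.mul_add] at hj; omega)]

lemma OWinsBlock.oWinsDelay_constd {L : Set (ℕ → Bool × Bool)} {n : ℕ} (hn : 0 < n)
    (h : OWinsBlock L fun _ => n) : OWinsDelay L (constd (2 * n - 1)) := by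
  obtain ⟨σ, hσ⟩ := h
  have hchunks (α : ℕ → Bool) (i : ℕ) :
      n ≤ (chunks n α i).length ∧ (chunks n α i).length ≤ 2 * n := by
    simp only [length_chunks]; omega
  refine ⟨delayStrategyOfBlock n σ,
    fun i α α' hαα' => delayStrategyOfBlock_congr n σ fun j hj => hαα' j ?_, fun α => ?_⟩
  · rw [Ssum_constd_succ]; omega
  · obtain ⟨hlen, hwin⟩ := hσ (chunks n α) (hchunks α)
    rw [flatSeq_chunks hn] at hwin
    convert hwin using 3 with i
    rw [flatSeq_eq_getD hn fun k => (hlen k).trans (length_chunks n α k)]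
    rfl

/-- if Player O wins the block game `Γ'_f(L)` for a constant function
`f : ℕ → ℕ₊`, then Player O wins the delay game with constant delay
`D = 2·max(f 0, f 1) − 1`; in particular, if `f ≡ n'` then Player O wins
`Γ_{const_{2n'−1}}(L)`. -/
theorem Owins_block_implies_Owins_constant_delay (L : Set (ℕ → Bool × Bool))
    (f : ℕ → ℕ) (hpos : ∀ i, 1 ≤ f i) (hconst : ∀ i, f i = f 0)
    (h : OWinsBlock L f) :
    OWinsDelay L (constd (2 * max (f 0) (f 1) - 1)) ∧
    ∀ n' : ℕ, 1 ≤ n' → OWinsBlock L (fun _ => n') →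
      OWinsDelay L (constd (2 * n' - 1)) := by
  refine ⟨?_, fun n' hn' h' => h'.oWinsDelay_constd hn'⟩
  rw [hconst 1, max_self]
  exact (funext hconst ▸ h : OWinsBlock L fun _ => f 0).oWinsDelay_constd (hpos 0)
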